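/- arXiv:2507.02796 — 3 statements merged into one kernel-verified Lean document; each statement's English description precedes it below -/
import Mathlib

section
/- The Lamperti density l(y) = (sin(πν)/π) · y^{ν-1} / (y^{2ν} + 2 y^ν cos(πν) + 1) on (0,∞), with parameter ν ∈ (0,1), is nonnegative and integrates to a probability (∫_0^∞ l(y) dy = 1). -/
/-!
Substituting `u = y ^ ν` turns the integral of the Lamperti density into
`sin (π ν) / (π ν) * ∫₀^∞ du / (u² + 2 u cos θ + 1)` with `θ = π ν`. Completing the square,
`u² + 2 u cos θ + 1 = (u + cos θ)² + sin² θ`, so an antiderivative is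
`arctan ((u + cos θ) / sin θ) / sin θ`, and the integral equals
`(π / 2 - arctan (cot θ)) / sin θ = θ / sin θ`.
-/

open MeasureTheory Set

/-- The Lamperti density of parameter ν. -/
noncomputable def lampertiDensity (ν y : ℝ) : ℝ :=
  (Real.sin (Real.pi * ν) / Real.pi) * y ^ (ν - 1) /
    (y ^ (2 * ν) + 2 * y ^ ν * Real.cos (Real.pi * ν) + 1)

open Real Filter Topology

section Quadratic

variable {θ : ℝ}

theorem sq_add_two_mul_mul_cos_add_one_eq (u θ : ℝ) :
    u ^ 2 + 2 * u * cos θ + 1 = (u + cos θ) ^ 2 + sin θ ^ 2 := by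
  linear_combination -sin_sq_add_cos_sq θ

theorem sq_add_two_mul_mul_cos_add_one_nonneg (u θ : ℝ) : 0 ≤ u ^ 2 + 2 * u * cos θ + 1 := by
  rw [sq_add_two_mul_mul_cos_add_one_eq]
  positivity

theorem sq_add_two_mul_mul_cos_add_one_pos (hθ : sin θ ≠ 0) (u : ℝ) :
    0 < u ^ 2 + 2 * u * cos θ + 1 := by
  rw [sq_add_two_mul_mul_cos_add_one_eq]
  positivity

theorem hasDerivAt_arctan_add_cos_div_sin (hθ : sin θ ≠ 0) (u : ℝ) :
    HasDerivAt (fun u => arctan ((u + cos θ) / sin θ) / sin θ)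
      (u ^ 2 + 2 * u * cos θ + 1)⁻¹ u := by
  have hlin : HasDerivAt (fun u => (u + cos θ) / sin θ) (1 / sin θ) u := by
    simpa using ((hasDerivAt_id u).add_const (cos θ)).div_const (sin θ)
  refine (((hasDerivAt_arctan _).comp u hlin).div_const (sin θ)).congr_deriv ?_
  have hpos := sq_add_two_mul_mul_cos_add_one_pos hθ u
  rw [sq_add_two_mul_mul_cos_add_one_eq] at hpos ⊢
  field_simp
  ring

theorem arctan_cos_div_sin (h0 : 0 < θ) (hπ : θ < π) : arctan (cos θ / sin θ) = π / 2 - θ := by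
  have hcot : cos θ / sin θ = tan (π / 2 - θ) := by
    rw [tan_eq_sin_div_cos, sin_pi_div_two_sub, cos_pi_div_two_sub]
  rw [hcot, arctan_tan (by linarith) (by linarith)]

theorem integral_Ioi_inv_sq_add_two_mul_mul_cos_add_one (h0 : 0 < θ) (hπ : θ < π) :
    ∫ u in Ioi 0, (u ^ 2 + 2 * u * cos θ + 1)⁻¹ = θ / sin θ := by
  have hsin : 0 < sin θ := sin_pos_of_pos_of_lt_pi h0 hπ
  have hlim : Tendsto (fun u => arctan ((u + cos θ) / sin θ) / sin θ) atTop
      (𝓝 (π / 2 / sin θ)) :=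
    ((tendsto_arctan_atTop.mono_right nhdsWithin_le_nhds).comp
      ((tendsto_atTop_add_const_right atTop _ tendsto_id).atTop_div_const hsin)).div_const _
  rw [integral_Ioi_of_hasDerivAt_of_nonneg'
      (fun u _ => hasDerivAt_arctan_add_cos_div_sin hsin.ne' u)
      (fun u _ => inv_nonneg.mpr (sq_add_two_mul_mul_cos_add_one_nonneg u θ)) hlim,
    zero_add, arctan_cos_div_sin h0 hπ]
  ring

end Quadratic

theorem lampertiDensity_nonneg {ν y : ℝ} (hν : ν ∈ Icc 0 1) (hy : 0 ≤ y) :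
    0 ≤ lampertiDensity ν y := by
  have hsin : 0 ≤ sin (π * ν) :=
    sin_nonneg_of_nonneg_of_le_pi (by nlinarith [pi_pos, hν.1]) (by nlinarith [pi_pos, hν.2])
  have hden := sq_add_two_mul_mul_cos_add_one_nonneg (y ^ ν) (π * ν)
  rw [← rpow_natCast, ← rpow_mul hy, mul_comm ν] at hden
  unfold lampertiDensity
  have := rpow_nonneg hy (ν - 1)
  positivity

/-- The form in which `integral_comp_rpow_Ioi` performs the substitution `u = y ^ ν`. -/
theorem lampertiDensity_eq_smul {ν y : ℝ} (hν : 0 < ν) (hy : 0 < y) :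
    lampertiDensity ν y = (|ν| * y ^ (ν - 1)) •
      (sin (π * ν) / (π * ν) * ((y ^ ν) ^ 2 + 2 * y ^ ν * cos (π * ν) + 1)⁻¹) := by
  rw [← rpow_natCast, ← rpow_mul hy.le, abs_of_pos hν, smul_eq_mul, lampertiDensity]
  push_cast
  rw [mul_comm ν 2]
  field_simp

/-- For ν ∈ (0,1) the Lamperti density is nonnegative on (0,∞) and integrates to 1. -/
theorem lampertiDensity_prob (ν : ℝ) (hν : ν ∈ Set.Ioo (0 : ℝ) 1) :
    (∀ y ∈ Set.Ioi (0 : ℝ), 0 ≤ lampertiDensity ν y) ∧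
      ∫ y in Set.Ioi (0 : ℝ), lampertiDensity ν y = 1 := by
  obtain ⟨hν0, hν1⟩ := hν
  refine ⟨fun y hy => lampertiDensity_nonneg ⟨hν0.le, hν1.le⟩ (le_of_lt hy), ?_⟩
  have hθ0 : 0 < π * ν := by positivity
  have hθπ : π * ν < π := by nlinarith [pi_pos]
  calc ∫ y in Ioi 0, lampertiDensity ν y
      = ∫ y in Ioi 0, (|ν| * y ^ (ν - 1)) •
          (sin (π * ν) / (π * ν) * ((y ^ ν) ^ 2 + 2 * y ^ ν * cos (π * ν) + 1)⁻¹) :=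
        setIntegral_congr_fun measurableSet_Ioi fun y hy => lampertiDensity_eq_smul hν0 hy
    _ = sin (π * ν) / (π * ν) * ∫ u in Ioi 0, (u ^ 2 + 2 * u * cos (π * ν) + 1)⁻¹ := by
        rw [integral_comp_rpow_Ioi
          (fun u => sin (π * ν) / (π * ν) * (u ^ 2 + 2 * u * cos (π * ν) + 1)⁻¹) hν0.ne',
          integral_const_mul]
    _ = 1 := by
        rw [integral_Ioi_inv_sq_add_two_mul_mul_cos_add_one hθ0 hθπ]
        have := (sin_pos_of_pos_of_lt_pi hθ0 hθπ).ne'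
        field_simp
end

section
/- Restriction representation: for a finite Borel set S ⊂ ℝ³, define Π_S = ∑_{k=1}^{N} δ_{C_k} where C_1, C_2, … are i.i.d. uniform on S, independent of N, and N has the fractional Poisson distribution P(N = n) = (1/n!)(ρ|S|)^n (-1)^n M_ν^{(n)}(-ρ^ν|S|^ν). Then Π_S has Laplace functional E[e^{-Π_S f}] = M_ν(-ρ^ν (∫_S (1 − e^{-f(s)}) ds)^ν) for every nonnegative measurable f; hence Π_S is a Mittag-Leffler point process on S. -/
open MeasureTheory ProbabilityTheory Set Finset

/-- The one-parameter Mittag-Leffler function `M_ν(x) = ∑ₖ xᵏ / Γ(1+νk)`. -/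
noncomputable def mittagLeffler (ν x : ℝ) : ℝ :=
  ∑' k : ℕ, x ^ k / Real.Gamma (1 + ν * k)

/-!
Given `N = n`, the points are i.i.d. uniform on `S`, so `E[e^{-Π_S f}] = ∑ₙ P(N = n) pⁿ` with
`p = |S|⁻¹ ∫_S e^{-f} ∈ [0, 1]`: the Laplace functional is the generating function of `N` at `p`.
With `x = ρ|S|` and `g(t) = M_ν(-t^ν)`, the fractional Poisson weights turn this sum into the Taylor
series of `g` at `x`, evaluated at `x(1 - p) = ρ ∫_S (1 - e^{-f})`. For `p < 1` that point lies in
the disc of radius `x` around `x`, on which `g` extends holomorphically as `z ↦ M_ν(-z^ν)`; here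
`M_ν` is entire because Wendel's inequality `Γ(y + ν) ≥ y Γ(y) (y + ν)^{ν-1}`, a consequence of the
log-convexity of `Γ`, makes `1 / Γ(1 + νk)` decay faster than any geometric sequence. For `p = 1`
both sides equal `1`.
-/

open Filter Topology

namespace Real

theorem mul_Gamma_mul_rpow_le_Gamma_add {x s : ℝ} (hx : 0 < x) (hs₀ : 0 < s) (hs₁ : s ≤ 1) :
    x * Gamma x * (x + s) ^ (s - 1) ≤ Gamma (x + s) := by
  rcases hs₁.eq_or_lt with rfl | hs₁
  · rw [sub_self, rpow_zero, mul_one, Gamma_add_one hx.ne']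
  have hxs : 0 < x + s := by linarith
  have hΓ : 0 < Gamma (x + s) := Gamma_pos_of_pos hxs
  -- log-convexity of `Γ` between `x + s` and `x + s + 1`, with weights `s` and `1 - s`
  have hconv := Gamma_mul_add_mul_le_rpow_Gamma_mul_rpow_Gamma hxs (by linarith : 0 < x + s + 1)
    hs₀ (by linarith : 0 < 1 - s) (by ring)
  rw [show s * (x + s) + (1 - s) * (x + s + 1) = x + 1 by ring, Gamma_add_one hx.ne',
    Gamma_add_one hxs.ne', mul_rpow hxs.le hΓ.le, mul_left_comm, ← rpow_add hΓ,
    add_sub_cancel, rpow_one] at hconv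
  calc x * Gamma x * (x + s) ^ (s - 1)
      ≤ (x + s) ^ (1 - s) * Gamma (x + s) * (x + s) ^ (s - 1) := by gcongr
    _ = Gamma (x + s) := by
        rw [mul_right_comm, ← rpow_add hxs, sub_add_sub_cancel', sub_self, rpow_zero, one_mul]

theorem eventually_mul_Gamma_le_Gamma_add {s : ℝ} (hs₀ : 0 < s) (hs₁ : s ≤ 1) (c : ℝ) :
    ∀ᶠ x in atTop, c * Gamma x ≤ Gamma (x + s) := by
  have hgrowth : Tendsto (fun x : ℝ => (x + s) ^ s) atTop atTop :=
    (tendsto_rpow_atTop hs₀).comp (tendsto_atTop_add_const_right _ s tendsto_id)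
  filter_upwards [hgrowth.eventually_ge_atTop (2 * c), eventually_ge_atTop s] with x hc hx
  have hx₀ : 0 < x := hs₀.trans_le hx
  have hxs : 0 < x + s := by linarith
  have hfactor : c ≤ x * (x + s) ^ (s - 1) := by
    rw [rpow_sub_one hxs.ne', mul_div_assoc', le_div_iff₀ hxs]
    nlinarith [rpow_nonneg hxs.le s]
  calc c * Gamma x ≤ x * (x + s) ^ (s - 1) * Gamma x := by gcongr
    _ = x * Gamma x * (x + s) ^ (s - 1) := by ring
    _ ≤ Gamma (x + s) := mul_Gamma_mul_rpow_le_Gamma_add hx₀ hs₀ hs₁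

end Real

open Real

theorem summable_pow_div_Gamma_one_add_mul {ν : ℝ} (hν₀ : 0 < ν) (hν₁ : ν ≤ 1) {A : ℝ}
    (hA : 0 ≤ A) : Summable fun k : ℕ => A ^ k / Gamma (1 + ν * k) := by
  refine summable_of_ratio_norm_eventually_le (r := 1 / 2) (by norm_num) ?_
  have hlim : Tendsto (fun k : ℕ => 1 + ν * k) atTop atTop :=
    tendsto_atTop_add_const_left _ _ (tendsto_natCast_atTop_atTop.const_mul_atTop hν₀)
  filter_upwards [hlim.eventually (eventually_mul_Gamma_le_Gamma_add hν₀ hν₁ (2 * A + 1))]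
    with k hk
  have hΓ : 0 < Gamma (1 + ν * k) := Gamma_pos_of_pos (by positivity)
  rw [norm_of_nonneg (by positivity), norm_of_nonneg (by positivity), Nat.cast_succ,
    mul_add, mul_one, ← add_assoc, pow_succ]
  calc A ^ k * A / Gamma (1 + ν * k + ν) ≤ A ^ k * A / ((2 * A + 1) * Gamma (1 + ν * k)) := by
        gcongr
    _ ≤ 1 / 2 * (A ^ k / Gamma (1 + ν * k)) := by
        rw [div_le_iff₀ (by positivity)]
        field_simp
        nlinarith [pow_nonneg hA k]

theorem mittagLeffler_zero (ν : ℝ) : mittagLeffler ν 0 = 1 := by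
  rw [mittagLeffler, tsum_eq_single 0 fun k hk => by rw [zero_pow hk, zero_div]]
  simp

noncomputable def complexMittagLeffler (ν : ℝ) (z : ℂ) : ℂ :=
  ∑' k : ℕ, z ^ k / (Gamma (1 + ν * k) : ℂ)

theorem complexMittagLeffler_ofReal (ν x : ℝ) :
    complexMittagLeffler ν x = mittagLeffler ν x := by
  simp [complexMittagLeffler, mittagLeffler, Complex.ofReal_tsum]

theorem differentiable_complexMittagLeffler {ν : ℝ} (hν₀ : 0 < ν) (hν₁ : ν ≤ 1) :
    Differentiable ℂ (complexMittagLeffler ν) := by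
  intro z
  have hball : DifferentiableOn ℂ (complexMittagLeffler ν) (Metric.ball 0 (‖z‖ + 1)) := by
    refine Complex.differentiableOn_tsum_of_summable_norm
      (summable_pow_div_Gamma_one_add_mul hν₀ hν₁ (by positivity : 0 ≤ ‖z‖ + 1))
      (fun k => ((differentiable_id.pow k).div_const _).differentiableOn) Metric.isOpen_ball
      fun k w hw => ?_
    rw [norm_div, norm_pow, Complex.norm_real,
      norm_of_nonneg (Gamma_pos_of_pos (by positivity)).le]
    gcongr
    exact (mem_ball_zero_iff.1 hw).le
  exact hball.differentiableAt (Metric.isOpen_ball.mem_nhds (by simp))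

theorem iteratedDeriv_eq_re_iteratedDeriv_of_eqOn {H : ℂ → ℂ} {g : ℝ → ℝ} {U : Set ℂ}
    {V : Set ℝ} (hH : DifferentiableOn ℂ H U) (hU : IsOpen U) (hV : IsOpen V)
    (hVU : ∀ t ∈ V, (t : ℂ) ∈ U) (hHg : ∀ t ∈ V, H t = g t) (n : ℕ) :
    ∀ t ∈ V, iteratedDeriv n g t = (iteratedDeriv n H t).re := by
  induction n with
  | zero => intro t ht; simp [hHg t ht]
  | succ n ih =>
    intro t ht
    have hnear : iteratedDeriv n g =ᶠ[𝓝 t] fun s : ℝ => (iteratedDeriv n H s).re :=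
      eventually_of_mem (hV.mem_nhds ht) ih
    have hdiff : DifferentiableAt ℂ (iteratedDeriv n H) t := by
      rw [iteratedDeriv_eq_iterate]
      exact ((hH.analyticOnNhd hU).iterated_deriv n t (hVU t ht)).differentiableAt
    rw [iteratedDeriv_succ, iteratedDeriv_succ, hnear.deriv_eq]
    exact hdiff.hasDerivAt.real_of_complex.deriv

theorem hasSum_taylorSeries_of_differentiableOn_complex {g : ℝ → ℝ} {H : ℂ → ℂ} {c r t : ℝ}
    (hH : DifferentiableOn ℂ H (Metric.ball (c : ℂ) r))
    (hHg : ∀ s ∈ Metric.ball c r, H s = g s) (ht : t ∈ Metric.ball c r) :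
    HasSum (fun n => (n.factorial : ℝ)⁻¹ * (t - c) ^ n * iteratedDeriv n g c) (g t) := by
  have hball : ∀ s ∈ Metric.ball c r, (s : ℂ) ∈ Metric.ball (c : ℂ) r := by
    intro s hs
    rwa [Metric.mem_ball, Complex.dist_eq, ← Complex.ofReal_sub, Complex.norm_real,
      ← dist_eq_norm]
  have htaylor := Complex.hasSum_re (Complex.hasSum_taylorSeries_on_ball hH (hball t ht))
  rw [hHg t ht, Complex.ofReal_re] at htaylor
  convert htaylor using 2 with n
  rw [iteratedDeriv_eq_re_iteratedDeriv_of_eqOn hH Metric.isOpen_ball Metric.isOpen_ball hball hHg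
      n c (Metric.mem_ball_self (Metric.pos_of_mem_ball ht)),
    ← Complex.ofReal_sub, ← Complex.ofReal_pow, ← Complex.ofReal_natCast, ← Complex.ofReal_inv,
    smul_eq_mul, smul_eq_mul, ← mul_assoc, ← Complex.ofReal_mul, Complex.re_ofReal_mul]

theorem hasSum_taylorSeries_mittagLeffler_neg_rpow {ν x h : ℝ} (hν₀ : 0 < ν) (hν₁ : ν ≤ 1)
    (hh : |h| < x) :
    HasSum (fun n => (n.factorial : ℝ)⁻¹ * h ^ n *
        iteratedDeriv n (fun t => mittagLeffler ν (-(t ^ ν))) x)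
      (mittagLeffler ν (-((x + h) ^ ν))) := by
  have hpos : ∀ w ∈ Metric.ball (x : ℂ) x, 0 < w.re := by
    intro w hw
    have := (Complex.abs_re_le_norm (w - x)).trans_lt (mem_ball_iff_norm.1 hw)
    rw [Complex.sub_re, Complex.ofReal_re] at this
    linarith [neg_abs_le (w.re - x)]
  have hH : DifferentiableOn ℂ (fun z => complexMittagLeffler ν (-(z ^ (ν : ℂ))))
      (Metric.ball (x : ℂ) x) := fun w hw =>
    ((differentiable_complexMittagLeffler hν₀ hν₁).differentiableAt.comp w
      (differentiableAt_id.cpow_const (Complex.mem_slitPlane_iff.2 (.inl (hpos w hw)))).neg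
      ).differentiableWithinAt
  have hHg : ∀ t ∈ Metric.ball x x, complexMittagLeffler ν (-((t : ℂ) ^ (ν : ℂ))) =
      mittagLeffler ν (-(t ^ ν)) := by
    intro t ht
    have ht₀ : 0 < t := by
      simpa using hpos t (by simpa [Complex.dist_eq, ← Complex.ofReal_sub, ← Real.dist_eq] using ht)
    rw [← complexMittagLeffler_ofReal, Complex.ofReal_neg, Complex.ofReal_cpow ht₀.le]
  simpa using hasSum_taylorSeries_of_differentiableOn_complex hH hHg
    (t := x + h) (by simpa [Real.dist_eq] using hh)

/-- `P(N = n)` for the fractional Poisson distribution with parameter `x` (the paper's `ρ|S|`). -/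
noncomputable def fractionalPoissonProb (ν x : ℝ) (n : ℕ) : ℝ :=
  (1 / n.factorial) * x ^ n * (-1 : ℝ) ^ n *
    iteratedDeriv n (fun z => mittagLeffler ν (-(z ^ ν))) x

theorem hasSum_fractionalPoissonProb_mul_pow {ν x p : ℝ} (hν₀ : 0 < ν) (hν₁ : ν ≤ 1)
    (hx : 0 < x) (hp : |p| < 1) :
    HasSum (fun n => fractionalPoissonProb ν x n * p ^ n)
      (mittagLeffler ν (-((x * (1 - p)) ^ ν))) := by
  have hxp : |-(x * p)| < x := by
    rw [abs_neg, abs_mul, abs_of_pos hx]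
    exact mul_lt_of_lt_one_right hx hp
  convert hasSum_taylorSeries_mittagLeffler_neg_rpow hν₀ hν₁ hxp using 1
  · ext n
    rw [fractionalPoissonProb]
    ring
  · ring_nf

theorem cond_real_apply' {α : Type*} [MeasurableSpace α] {μ : Measure α} {s t : Set α}
    (ht : MeasurableSet t) : μ[|s].real t = μ.real (t ∩ s) / μ.real s := by
  rw [measureReal_def, cond_apply' ht, ENNReal.toReal_mul, ENNReal.toReal_inv, Set.inter_comm,
    div_eq_inv_mul, measureReal_def, measureReal_def]

theorem setIntegral_eq_measureReal_mul_integral_cond {α E : Type*} [MeasurableSpace α]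
    [NormedAddCommGroup E] [NormedSpace ℝ E] {μ : Measure α} {s : Set α} (hs₀ : μ s ≠ 0)
    (hs : μ s ≠ ⊤) (g : α → E) : ∫ a in s, g a ∂μ = μ.real s • ∫ a, g a ∂μ[|s] := by
  rw [ProbabilityTheory.cond, integral_smul_measure, ENNReal.toReal_inv, ← measureReal_def,
    smul_inv_smul₀ (a := μ.real s) (ENNReal.toReal_pos hs₀ hs).ne']

section ExpNeg

variable {α : Type*} [MeasurableSpace α] {μ : Measure α} {f : α → ℝ}

theorem abs_exp_neg_le_one {x : ℝ} (hx : 0 ≤ x) : |exp (-x)| ≤ 1 := by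
  rw [abs_of_pos (exp_pos _), exp_le_one_iff, neg_nonpos]
  exact hx

theorem integrable_exp_neg [IsFiniteMeasure μ] (hf : Measurable f) (hf₀ : ∀ a, 0 ≤ f a) :
    Integrable (fun a => exp (-f a)) μ :=
  .of_bound (by fun_prop) 1 (ae_of_all _ fun a => abs_exp_neg_le_one (hf₀ a))

theorem integral_exp_neg_mem_Icc [IsProbabilityMeasure μ] (hf : Measurable f)
    (hf₀ : ∀ a, 0 ≤ f a) : ∫ a, exp (-f a) ∂μ ∈ Set.Icc 0 1 :=
  ⟨integral_nonneg fun a => (exp_pos _).le,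
    (integral_mono (integrable_exp_neg hf hf₀) (integrable_const 1)
      fun a => (le_abs_self _).trans (abs_exp_neg_le_one (hf₀ a))).trans_eq (by simp)⟩

theorem setIntegral_one_sub_exp_neg {s : Set α} (hs₀ : μ s ≠ 0) (hs : μ s ≠ ⊤)
    (hf : Measurable f) (hf₀ : ∀ a, 0 ≤ f a) :
    ∫ a in s, (1 - exp (-f a)) ∂μ = μ.real s * (1 - ∫ a, exp (-f a) ∂μ[|s]) := by
  have : IsProbabilityMeasure μ[|s] := cond_isProbabilityMeasure_of_finite hs₀ hs
  rw [setIntegral_eq_measureReal_mul_integral_cond hs₀ hs,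
    integral_sub (integrable_const 1) (integrable_exp_neg hf hf₀), integral_const, probReal_univ,
    one_smul, smul_eq_mul]

end ExpNeg

section ConditionallyIIDPoints

variable {Ω α : Type*} [MeasurableSpace Ω] [MeasurableSpace α] {P : Measure Ω} {μ : Measure α}
  {N : Ω → ℕ} {C : ℕ → Ω → α}

theorem map_restrict_eq_smul_pi [IsFiniteMeasure P] [IsFiniteMeasure μ]
    (hC : ∀ i, Measurable (C i)) {n : ℕ}
    (hjoint : ∀ A : Fin n → Set α, (∀ i, MeasurableSet (A i)) →
      P.real {ω | N ω = n ∧ ∀ i : Fin n, C i ω ∈ A i} =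
        P.real {ω | N ω = n} * ∏ i, μ.real (A i)) :
    (P.restrict {ω | N ω = n}).map (fun ω (i : Fin n) => C i ω) =
      P {ω | N ω = n} • Measure.pi fun _ => μ := by
  have hC' : Measurable fun ω (i : Fin n) => C i ω := measurable_pi_lambda _ fun i => hC i
  have hbox : ∀ A : Fin n → Set α, (∀ i, MeasurableSet (A i)) →
      (P.restrict {ω | N ω = n}).map (fun ω (i : Fin n) => C i ω) (univ.pi A) =
        (P {ω | N ω = n} • Measure.pi fun _ => μ) (univ.pi A) := by
    intro A hA
    have h := hjoint A hA
    simp only [measureReal_def] at h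
    rw [Measure.map_apply hC' (.univ_pi hA), Measure.restrict_apply (hC' (.univ_pi hA)),
      Measure.smul_apply, Measure.pi_pi, smul_eq_mul,
      ← ENNReal.toReal_eq_toReal_iff' (measure_ne_top _ _)
        (ENNReal.mul_ne_top (measure_ne_top _ _)
          (ENNReal.prod_ne_top fun i _ => measure_ne_top _ _)),
      ENNReal.toReal_mul, ENNReal.toReal_prod]
    convert h using 3
    ext ω
    simp [and_comm]
  refine ext_of_generate_finite _ generateFrom_pi.symm isPiSystem_pi ?_ ?_
  · rintro _ ⟨A, hA, rfl⟩
    exact hbox A fun i => hA i (mem_univ i)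
  · simpa using hbox (fun _ => univ) fun _ => .univ

theorem setIntegral_prod_eq_measureReal_mul_pow [IsFiniteMeasure P] [IsFiniteMeasure μ]
    (hC : ∀ i, Measurable (C i)) {n : ℕ}
    (hjoint : ∀ A : Fin n → Set α, (∀ i, MeasurableSet (A i)) →
      P.real {ω | N ω = n ∧ ∀ i : Fin n, C i ω ∈ A i} =
        P.real {ω | N ω = n} * ∏ i, μ.real (A i))
    {φ : α → ℝ} (hφ : Measurable φ) :
    ∫ ω in {ω | N ω = n}, ∏ i : Fin n, φ (C i ω) ∂P =
      P.real {ω | N ω = n} * (∫ a, φ a ∂μ) ^ n := by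
  have hC' : Measurable fun ω (i : Fin n) => C i ω := measurable_pi_lambda _ fun i => hC i
  have hprod : Measurable fun y : Fin n → α => ∏ i, φ (y i) :=
    Finset.measurable_prod _ fun i _ => hφ.comp (measurable_pi_apply i)
  rw [← integral_map (f := fun y : Fin n → α => ∏ i, φ (y i)) hC'.aemeasurable
    hprod.aestronglyMeasurable, map_restrict_eq_smul_pi hC hjoint, integral_smul_measure,
    integral_fintype_prod_eq_pow, Fintype.card_fin, smul_eq_mul, measureReal_def]

theorem integral_prod_range_eq_tsum [IsFiniteMeasure P] [IsFiniteMeasure μ]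
    (hN : Measurable N) (hC : ∀ i, Measurable (C i))
    (hjoint : ∀ (n : ℕ) (A : Fin n → Set α), (∀ i, MeasurableSet (A i)) →
      P.real {ω | N ω = n ∧ ∀ i : Fin n, C i ω ∈ A i} =
        P.real {ω | N ω = n} * ∏ i, μ.real (A i))
    {φ : α → ℝ} (hφ : Measurable φ) (hφ₁ : ∀ a, |φ a| ≤ 1) :
    ∫ ω, ∏ k ∈ range (N ω), φ (C k ω) ∂P = ∑' n, P.real {ω | N ω = n} * (∫ a, φ a ∂μ) ^ n := by
  have hfiber : ∀ n, MeasurableSet {ω | N ω = n} := fun n => hN (measurableSet_singleton n)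
  have hmeas : Measurable fun ω => ∏ k ∈ range (N ω), φ (C k ω) :=
    (measurable_from_prod_countable_left (f := fun q : Ω × ℕ => ∏ k ∈ range q.2, φ (C k q.1))
      fun n => Finset.measurable_prod (range n) fun k _ => hφ.comp (hC k)).comp
      (measurable_id.prodMk hN)
  have hint : Integrable (fun ω => ∏ k ∈ range (N ω), φ (C k ω)) P :=
    .of_bound hmeas.aestronglyMeasurable 1 <| ae_of_all _ fun ω => by
      rw [norm_prod]
      exact Finset.prod_le_one (fun _ _ => norm_nonneg _) fun k _ => hφ₁ _
  have hcover : ⋃ n, {ω | N ω = n} = Set.univ := by ext; simp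
  have hdisj : Pairwise (Function.onFun Disjoint fun n => {ω | N ω = n}) := fun m n hmn =>
    Set.disjoint_left.2 fun ω (hm : N ω = m) (hn : N ω = n) => hmn (hm.symm.trans hn)
  rw [← setIntegral_univ, ← hcover, integral_iUnion hfiber hdisj hint.integrableOn]
  refine tsum_congr fun n => ?_
  rw [← setIntegral_prod_eq_measureReal_mul_pow hC (hjoint n) hφ]
  refine setIntegral_congr_fun (hfiber n) fun ω (hω : N ω = n) => ?_
  simp only [hω, Finset.prod_range]

theorem integral_exp_neg_sum_eq_tsum [IsFiniteMeasure P] [IsFiniteMeasure μ]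
    (hN : Measurable N) (hC : ∀ i, Measurable (C i))
    (hjoint : ∀ (n : ℕ) (A : Fin n → Set α), (∀ i, MeasurableSet (A i)) →
      P.real {ω | N ω = n ∧ ∀ i : Fin n, C i ω ∈ A i} =
        P.real {ω | N ω = n} * ∏ i, μ.real (A i))
    {f : α → ℝ} (hf : Measurable f) (hf₀ : ∀ a, 0 ≤ f a) :
    ∫ ω, exp (-∑ k ∈ range (N ω), f (C k ω)) ∂P =
      ∑' n, P.real {ω | N ω = n} * (∫ a, exp (-f a) ∂μ) ^ n := by
  simp_rw [← Finset.sum_neg_distrib, exp_sum]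
  exact integral_prod_range_eq_tsum hN hC hjoint (by fun_prop) fun a => abs_exp_neg_le_one (hf₀ a)

end ConditionallyIIDPoints

theorem fractional_poisson_restriction_laplace_functional_general
    {Ω : Type*} [MeasureSpace Ω] [IsProbabilityMeasure (ℙ : Measure Ω)]
    (ν ρ : ℝ) (hν : ν ∈ Set.Ioc (0 : ℝ) 1) (hρ : 0 < ρ)
    (S : Set (EuclideanSpace ℝ (Fin 3)))
    (hSfin : MeasureTheory.volume S ≠ ⊤) (hSpos : MeasureTheory.volume S ≠ 0)
    (N : Ω → ℕ) (hNmeas : Measurable N)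
    (C : ℕ → Ω → EuclideanSpace ℝ (Fin 3)) (hCmeas : ∀ i, Measurable (C i))
    (hN : ∀ n : ℕ, (ℙ {ω | N ω = n}).toReal =
      (1 / n.factorial) * (ρ * (MeasureTheory.volume S).toReal) ^ n * (-1 : ℝ) ^ n *
        iteratedDeriv n (fun z => mittagLeffler ν (-(z ^ ν)))
          (ρ * (MeasureTheory.volume S).toReal))
    (hjoint : ∀ (n : ℕ) (A : Fin n → Set (EuclideanSpace ℝ (Fin 3))),
      (∀ i, MeasurableSet (A i)) →
      (ℙ {ω | N ω = n ∧ ∀ i : Fin n, C i ω ∈ A i}).toReal =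
        (ℙ {ω | N ω = n}).toReal *
          ∏ i, ((MeasureTheory.volume (A i ∩ S)).toReal /
            (MeasureTheory.volume S).toReal)) :
    ∀ f : EuclideanSpace ℝ (Fin 3) → ℝ, Measurable f → (∀ x, 0 ≤ f x) →
      ∫ ω, Real.exp (-(∑ k ∈ Finset.range (N ω), f (C k ω))) ∂ℙ =
        mittagLeffler ν (-(ρ ^ ν * (∫ x in S, (1 - Real.exp (-(f x)))) ^ ν)) := by
  intro f hf hf₀
  set μ := (volume : Measure (EuclideanSpace ℝ (Fin 3)))[|S]
  have : IsProbabilityMeasure μ := cond_isProbabilityMeasure_of_finite hSpos hSfin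
  have hjoint' : ∀ (n : ℕ) (A : Fin n → Set (EuclideanSpace ℝ (Fin 3))),
      (∀ i, MeasurableSet (A i)) → (ℙ : Measure Ω).real {ω | N ω = n ∧ ∀ i : Fin n, C i ω ∈ A i} =
        (ℙ : Measure Ω).real {ω | N ω = n} * ∏ i, μ.real (A i) := fun n A hA => by
    simp only [μ, cond_real_apply' (hA _)]
    simpa only [measureReal_def] using hjoint n A hA
  obtain ⟨hp₀, hp₁⟩ := integral_exp_neg_mem_Icc (μ := μ) hf hf₀
  rw [integral_exp_neg_sum_eq_tsum hNmeas hCmeas hjoint' hf hf₀,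
    setIntegral_one_sub_exp_neg hSpos hSfin hf hf₀,
    ← mul_rpow hρ.le (mul_nonneg measureReal_nonneg (sub_nonneg.2 hp₁)), ← mul_assoc]
  generalize ∫ a, exp (-f a) ∂μ = p at hp₀ hp₁ ⊢
  rcases hp₁.lt_or_eq with hp₁ | rfl
  · rw [← (hasSum_fractionalPoissonProb_mul_pow (x := ρ * volume.real S) hν.1 hν.2
      (mul_pos hρ (ENNReal.toReal_pos hSpos hSfin)) (abs_lt.2 ⟨by linarith, hp₁⟩)).tsum_eq]
    exact tsum_congr fun n => by rw [measureReal_def, hN n, fractionalPoissonProb, measureReal_def]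
  · rw [sub_self, mul_zero, zero_rpow hν.1.ne', neg_zero, mittagLeffler_zero]
    -- `∑ P(N = n) = 1` is the case `φ ≡ 1` of the generating-function identity
    simpa using (integral_prod_range_eq_tsum hNmeas hCmeas hjoint' measurable_const
      (φ := fun _ => (1 : ℝ)) (by simp)).symm

/-- Restriction representation: if `N` has the fractional Poisson distribution
`P(N = n) = (1/n!)(ρ|S|)ⁿ(-1)ⁿ M_ν^{(n)}(-ρ^ν|S|^ν)` and, given `N = n`, the points
`C₁,…,Cₙ` are i.i.d. uniform on `S` (independent of `N`), then the point process
`Π_S = ∑_{k=1}^N δ_{C_k}` has Laplace functional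
`E[e^{-Π_S f}] = M_ν(-ρ^ν (∫_S (1-e^{-f}))^ν)` for every nonnegative measurable `f`. -/
theorem fractional_poisson_restriction_laplace_functional
    {Ω : Type*} [MeasureSpace Ω] [IsProbabilityMeasure (ℙ : Measure Ω)]
    (ν ρ : ℝ) (hν : ν ∈ Set.Ioc (0 : ℝ) 1) (hρ : 0 < ρ)
    (S : Set (EuclideanSpace ℝ (Fin 3))) (hS : MeasurableSet S)
    (hSfin : MeasureTheory.volume S ≠ ⊤) (hSpos : MeasureTheory.volume S ≠ 0)
    (N : Ω → ℕ) (hNmeas : Measurable N)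
    (C : ℕ → Ω → EuclideanSpace ℝ (Fin 3)) (hCmeas : ∀ i, Measurable (C i))
    (hN : ∀ n : ℕ, (ℙ {ω | N ω = n}).toReal =
      (1 / n.factorial) * (ρ * (MeasureTheory.volume S).toReal) ^ n * (-1 : ℝ) ^ n *
        iteratedDeriv n (fun z => mittagLeffler ν (-(z ^ ν)))
          (ρ * (MeasureTheory.volume S).toReal))
    (hjoint : ∀ (n : ℕ) (A : Fin n → Set (EuclideanSpace ℝ (Fin 3))),
      (∀ i, MeasurableSet (A i)) →
      (ℙ {ω | N ω = n ∧ ∀ i : Fin n, C i ω ∈ A i}).toReal =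
        (ℙ {ω | N ω = n}).toReal *
          ∏ i, ((MeasureTheory.volume (A i ∩ S)).toReal /
            (MeasureTheory.volume S).toReal)) :
    ∀ f : EuclideanSpace ℝ (Fin 3) → ℝ, Measurable f → (∀ x, 0 ≤ f x) →
      ∫ ω, Real.exp (-(∑ k ∈ Finset.range (N ω), f (C k ω))) ∂ℙ =
        mittagLeffler ν (-(ρ ^ ν * (∫ x in S, (1 - Real.exp (-(f x)))) ^ ν)) :=
  fractional_poisson_restriction_laplace_functional_general ν ρ hν hρ S hSfin hSpos N hNmeas C
    hCmeas hN hjoint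
end

section
/- Equality in distribution for Model 1: the non-Markovian random flight (X^ν_{(1)}(t), V^ν_{(1)}(t)) with Schur-constant Mittag-Leffler flight times equals in distribution, for each fixed t, the Markovian random flight (X^{(c, λL)}_t, V^{(c, λL)}_t) with the rate parameter randomized by an independent Lamperti variable L of parameter ν. Equivalently, (J_1^{(ν)}, …, J_n^{(ν)}) =_d (J_1/L, …, J_n/L) with {J_k} i.i.d. Exp(λ) independent of L. -/
/-!
Given `L = l`, the quotients `J_k / l` are independent exponentials of rate `λ l`, so
`P(J_k / L > t_k for all k) = E[exp(-λ (∑ t_k) L)] = M_ν(-λ^ν (∑ t_k)^ν)`, which is the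
Schur-constant survival function of the `J_k^{(ν)}`. Both laws are carried by the open positive
orthant, and there a finite measure is determined by its values on the upper orthants
`{x | t < x}` with `t ≥ 0`: the orthants `{x | t < x}` form a π-system generating the Borel
σ-algebra of `ℝⁿ`, and positivity lets one replace `t` by `max t 0`.
-/

open MeasureTheory ProbabilityTheory Set

lemma isCountablySpanning_range_Ioi : IsCountablySpanning (range (Ioi : ℝ → Set ℝ)) :=
  ⟨fun n : ℕ => Ioi (-n), fun n => mem_range_self _, by
    refine iUnion_eq_univ_iff.mpr fun x => ?_
    obtain ⟨n, hn⟩ := exists_nat_gt (-x)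
    exact ⟨n, neg_lt.mp hn⟩⟩

lemma measurableSpace_pi_eq_generateFrom_Ioi {ι : Type*} [Finite ι] :
    (MeasurableSpace.pi : MeasurableSpace (ι → ℝ)) =
      MeasurableSpace.generateFrom (pi univ '' pi univ fun _ => range Ioi) :=
  (generateFrom_eq_pi (fun _ => borel_eq_generateFrom_Ioi ℝ ▸ BorelSpace.measurable_eq.symm)
    fun _ => isCountablySpanning_range_Ioi).symm

lemma ae_eq_setOf_forall_lt_max {ι : Type*} {μ : Measure (ι → ℝ)} (hμ : ∀ᵐ x ∂μ, ∀ i, 0 < x i)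
    (t : ι → ℝ) : {x | ∀ i, t i < x i} =ᵐ[μ] {x | ∀ i, max (t i) 0 < x i} := by
  filter_upwards [hμ] with x hx
  exact propext <| forall_congr' fun i => by simp [hx i]

theorem MeasureTheory.Measure.ext_of_measure_setOf_forall_lt_of_ae_pos {ι : Type*} [Fintype ι]
    {μ ν : Measure (ι → ℝ)} [IsFiniteMeasure μ]
    (hμ : ∀ᵐ x ∂μ, ∀ i, 0 < x i) (hν : ∀ᵐ x ∂ν, ∀ i, 0 < x i)
    (h : ∀ t : ι → ℝ, 0 ≤ t → μ {x | ∀ i, t i < x i} = ν {x | ∀ i, t i < x i}) : μ = ν := by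
  have hsurv (t : ι → ℝ) : μ {x | ∀ i, t i < x i} = ν {x | ∀ i, t i < x i} := by
    rw [measure_congr (ae_eq_setOf_forall_lt_max hμ t),
      measure_congr (ae_eq_setOf_forall_lt_max hν t)]
    exact h _ fun i => le_max_right _ _
  refine ext_of_generate_finite _ measurableSpace_pi_eq_generateFrom_Ioi
    (IsPiSystem.pi fun _ => isPiSystem_Ioi) ?_ ?_
  · rintro _ ⟨s, hs, rfl⟩
    choose t ht using fun i => hs i (mem_univ i)
    simpa [Set.pi, ← ht] using hsurv t
  · rw [← measure_congr (Filter.eventuallyEq_univ.mpr hμ),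
      ← measure_congr (Filter.eventuallyEq_univ.mpr hν)]
    exact h 0 le_rfl

section
variable {Ω : Type*} [MeasurableSpace Ω] {μ : Measure Ω}

lemma ae_map_forall_pos {ι : Type*} [Countable ι] {X : Ω → ι → ℝ} (hX : Measurable X)
    (hpos : ∀ ω i, 0 < X ω i) : ∀ᵐ x ∂(μ.map X), ∀ i, 0 < x i :=
  (ae_map_iff hX.aemeasurable (by measurability)).mpr (ae_of_all _ hpos)

variable [IsFiniteMeasure μ]

lemma integrable_exp_neg_mul_of_nonneg {L : Ω → ℝ} (hL : Measurable L) (hLnn : ∀ ω, 0 ≤ L ω)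
    {c : ℝ} (hc : 0 ≤ c) : Integrable (fun ω => Real.exp (-(c * L ω))) μ :=
  .of_bound (by fun_prop) 1 <| ae_of_all _ fun ω => by
    rw [Real.norm_of_nonneg (Real.exp_pos _).le, Real.exp_le_one_iff, neg_nonpos]
    exact mul_nonneg hc (hLnn ω)

lemma ProbabilityTheory.IndepFun.measure_preimage_eq_lintegral {α β : Type*}
    [MeasurableSpace α] [MeasurableSpace β] {X : Ω → α} {Y : Ω → β}
    (hXY : IndepFun X Y μ) (hX : Measurable X) (hY : Measurable Y) {S : Set (α × β)}
    (hS : MeasurableSet S) :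
    μ ((fun ω => (X ω, Y ω)) ⁻¹' S) = ∫⁻ x, (μ.map Y) (Prod.mk x ⁻¹' S) ∂(μ.map X) := by
  rw [← Measure.map_apply (hX.prodMk hY) hS,
    (indepFun_iff_map_prod_eq_prod_map_map hX.aemeasurable hY.aemeasurable).mp hXY,
    Measure.prod_apply hS]

variable {ι : Type*} [Fintype ι] {J : ι → Ω → ℝ} {lam : ℝ}

lemma measure_setOf_forall_lt_eq_exp_of_iIndepFun (hJ : iIndepFun J μ)
    (hexp : ∀ i s, 0 ≤ s → (μ {ω | s < J i ω}).toReal = Real.exp (-(lam * s)))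
    {t : ι → ℝ} (ht : 0 ≤ t) :
    μ {ω | ∀ i, t i < J i ω} = ENNReal.ofReal (Real.exp (-(lam * ∑ i, t i))) := by
  have hfactor (i : ι) : μ (J i ⁻¹' Ioi (t i)) = ENNReal.ofReal (Real.exp (-(lam * t i))) := by
    rw [← hexp i _ (ht i), ENNReal.ofReal_toReal (measure_ne_top _ _)]; rfl
  have hinter : {ω | ∀ i, t i < J i ω} = ⋂ i ∈ Finset.univ, J i ⁻¹' Ioi (t i) := by
    ext; simp
  rw [hinter, hJ.measure_inter_preimage_eq_mul _ fun i _ => measurableSet_Ioi, Finset.mul_sum,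
    ← Finset.sum_neg_distrib, Real.exp_sum,
    ENNReal.ofReal_prod_of_nonneg fun i _ => (Real.exp_pos _).le]
  exact Finset.prod_congr rfl fun i _ => hfactor i

lemma measure_setOf_forall_lt_div_eq_integral_exp (hJmeas : ∀ i, Measurable (J i))
    (hJ : iIndepFun J μ) (hlam : 0 ≤ lam)
    (hexp : ∀ i s, 0 ≤ s → (μ {ω | s < J i ω}).toReal = Real.exp (-(lam * s)))
    {L : Ω → ℝ} (hLmeas : Measurable L) (hLpos : ∀ ω, 0 < L ω)
    (hindep : IndepFun (fun ω i => J i ω) L μ) {t : ι → ℝ} (ht : 0 ≤ t) :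
    μ {ω | ∀ i, t i < J i ω / L ω} =
      ENNReal.ofReal (∫ ω, Real.exp (-((lam * ∑ i, t i) * L ω)) ∂μ) := by
  have hJvec : Measurable fun ω i => J i ω := measurable_pi_lambda _ hJmeas
  set S : Set (ℝ × (ι → ℝ)) := {p | ∀ i, t i < p.2 i / p.1}
  have hS : MeasurableSet S := by
    simp only [S, ofPred_forall]
    exact .iInter fun i => measurableSet_lt measurable_const (by fun_prop)
  have hsection {l : ℝ} (hl : 0 < l) : (μ.map fun ω i => J i ω) (Prod.mk l ⁻¹' S) =
      ENNReal.ofReal (Real.exp (-((lam * ∑ i, t i) * l))) := by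
    rw [Measure.map_apply hJvec (hS.preimage measurable_prodMk_left)]
    have hset : (fun ω i => J i ω) ⁻¹' (Prod.mk l ⁻¹' S) = {ω | ∀ i, t i * l < J i ω} := by
      ext ω; simp [S, lt_div_iff₀ hl]
    rw [hset, measure_setOf_forall_lt_eq_exp_of_iIndepFun hJ hexp
      fun i => mul_nonneg (ht i) hl.le, ← Finset.sum_mul, mul_assoc]
  have hLpos_ae : ∀ᵐ l ∂(μ.map L), 0 < l :=
    (ae_map_iff hLmeas.aemeasurable measurableSet_Ioi).mpr (ae_of_all _ hLpos)
  have hc : 0 ≤ lam * ∑ i, t i := mul_nonneg hlam (Finset.sum_nonneg fun i _ => ht i)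
  calc μ {ω | ∀ i, t i < J i ω / L ω}
      = ∫⁻ l, (μ.map fun ω i => J i ω) (Prod.mk l ⁻¹' S) ∂(μ.map L) :=
        hindep.symm.measure_preimage_eq_lintegral hLmeas hJvec hS
    _ = ∫⁻ l, ENNReal.ofReal (Real.exp (-((lam * ∑ i, t i) * l))) ∂(μ.map L) :=
        lintegral_congr_ae (hLpos_ae.mono fun l hl => hsection hl)
    _ = ENNReal.ofReal (∫ ω, Real.exp (-((lam * ∑ i, t i) * L ω)) ∂μ) := by
        rw [lintegral_map (by fun_prop) hLmeas, ← ofReal_integral_eq_lintegral_ofReal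
          (integrable_exp_neg_mul_of_nonneg hLmeas (fun ω => (hLpos ω).le) hc)
          (ae_of_all _ fun ω => (Real.exp_pos _).le)]

end

theorem model1_flight_times_lamperti_representation_general
    {Ω : Type*} [MeasureSpace Ω] [IsProbabilityMeasure (ℙ : Measure Ω)]
    {Ω' : Type*} [MeasureSpace Ω'] [IsProbabilityMeasure (ℙ : Measure Ω')]
    (ν lam : ℝ) (hlam : 0 < lam)
    -- the Schur-constant Mittag-Leffler flight times:
    (Jν : ℕ → Ω → ℝ) (hJνmeas : ∀ i, Measurable (Jν i)) (hJνpos : ∀ i ω, 0 < Jν i ω)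
    (hJνsurv : ∀ n : ℕ, 1 ≤ n → ∀ s : Fin n → ℝ, (∀ k, 0 ≤ s k) →
      (ℙ {ω | ∀ k : Fin n, s k < Jν k ω}).toReal =
        mittagLeffler ν (-(lam ^ ν * (∑ k, s k) ^ ν)))
    -- i.i.d. exponential flight times of rate λ:
    (J : ℕ → Ω' → ℝ) (hJmeas : ∀ i, Measurable (J i)) (hJpos : ∀ i ω, 0 < J i ω)
    (hJindep : iIndepFun J ℙ)
    (hJexp : ∀ (i : ℕ) (s : ℝ), 0 ≤ s →
      (ℙ {ω | s < J i ω}).toReal = Real.exp (-(lam * s)))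
    -- a Lamperti variable `L` of parameter ν, independent of the `J_k`:
    (L : Ω' → ℝ) (hLmeas : Measurable L) (hLpos : ∀ ω, 0 < L ω)
    (hLlap : ∀ η : ℝ, 0 ≤ η →
      ∫ ω, Real.exp (-(η * L ω)) ∂ℙ = mittagLeffler ν (-(η ^ ν)))
    (hindep : IndepFun (fun ω => fun i => J i ω) L ℙ) :
    ∀ n : ℕ,
      Measure.map (fun ω => fun k : Fin n => Jν k ω) ℙ =
        Measure.map (fun ω => fun k : Fin n => J k ω / L ω) ℙ := by
  intro n
  have hJνvec : Measurable fun ω (k : Fin n) => Jν k ω :=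
    measurable_pi_lambda _ fun k => hJνmeas k
  have hquot : Measurable fun ω (k : Fin n) => J k ω / L ω :=
    measurable_pi_lambda _ fun k => (hJmeas k).div hLmeas
  refine Measure.ext_of_measure_setOf_forall_lt_of_ae_pos
    (ae_map_forall_pos hJνvec fun ω k => hJνpos k ω)
    (ae_map_forall_pos hquot fun ω k => div_pos (hJpos k ω) (hLpos ω)) fun t ht => ?_
  rw [Measure.map_apply hJνvec (by measurability), Measure.map_apply hquot (by measurability)]
  simp only [preimage_ofPred_eq]
  rcases Nat.eq_zero_or_pos n with rfl | hn
  · simp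
  have hsum : 0 ≤ ∑ k, t k := Finset.sum_nonneg fun k _ => ht k
  have hindep_n : IndepFun (fun ω (k : Fin n) => J k ω) L ℙ :=
    (hindep.comp (φ := fun x (k : Fin n) => x k) (ψ := id) (by fun_prop) measurable_id :)
  rw [measure_setOf_forall_lt_div_eq_integral_exp (J := fun k : Fin n => J k)
      (fun k => hJmeas k) (hJindep.precomp (g := Fin.val) Fin.val_injective) hlam.le
      (fun k => hJexp k) hLmeas hLpos hindep_n ht,
    hLlap _ (mul_nonneg hlam.le hsum), Real.mul_rpow hlam.le hsum, ← hJνsurv n hn t ht,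
    ENNReal.ofReal_toReal (measure_ne_top _ _)]

/-- Equality in distribution for Model 1: the Schur-constant Mittag-Leffler flight times
`(J₁^{(ν)},…,Jₙ^{(ν)})` equal in distribution `(J₁/L,…,Jₙ/L)` where the `J_k` are i.i.d.
exponential of rate λ, independent of a Lamperti variable `L` of parameter ν (so the
non-Markovian random flight equals in distribution the Markovian one with rate `λL`). -/
theorem model1_flight_times_lamperti_representation
    {Ω : Type*} [MeasureSpace Ω] [IsProbabilityMeasure (ℙ : Measure Ω)]
    {Ω' : Type*} [MeasureSpace Ω'] [IsProbabilityMeasure (ℙ : Measure Ω')]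
    (ν lam : ℝ) (hν : ν ∈ Set.Ioc (0 : ℝ) 1) (hlam : 0 < lam)
    -- the Schur-constant Mittag-Leffler flight times:
    (Jν : ℕ → Ω → ℝ) (hJνmeas : ∀ i, Measurable (Jν i)) (hJνpos : ∀ i ω, 0 < Jν i ω)
    (hJνsurv : ∀ n : ℕ, 1 ≤ n → ∀ s : Fin n → ℝ, (∀ k, 0 ≤ s k) →
      (ℙ {ω | ∀ k : Fin n, s k < Jν k ω}).toReal =
        mittagLeffler ν (-(lam ^ ν * (∑ k, s k) ^ ν)))
    -- i.i.d. exponential flight times of rate λ: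
    (J : ℕ → Ω' → ℝ) (hJmeas : ∀ i, Measurable (J i)) (hJpos : ∀ i ω, 0 < J i ω)
    (hJindep : iIndepFun J ℙ)
    (hJexp : ∀ (i : ℕ) (s : ℝ), 0 ≤ s →
      (ℙ {ω | s < J i ω}).toReal = Real.exp (-(lam * s)))
    -- a Lamperti variable `L` of parameter ν, independent of the `J_k`:
    (L : Ω' → ℝ) (hLmeas : Measurable L) (hLpos : ∀ ω, 0 < L ω)
    (hLlap : ∀ η : ℝ, 0 ≤ η →
      ∫ ω, Real.exp (-(η * L ω)) ∂ℙ = mittagLeffler ν (-(η ^ ν)))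
    (hindep : IndepFun (fun ω => fun i => J i ω) L ℙ) :
    ∀ n : ℕ,
      Measure.map (fun ω => fun k : Fin n => Jν k ω) ℙ =
        Measure.map (fun ω => fun k : Fin n => J k ω / L ω) ℙ :=
  model1_flight_times_lamperti_representation_general ν lam hlam Jν hJνmeas hJνpos hJνsurv J hJmeas
    hJpos hJindep hJexp L hLmeas hLpos hLlap hindep
end
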